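/- Fix j, Z = (z_q) and multipliers η_j^{(q)}, q ∈ Ω_j, and suppose the symmetric matrix ρ|Ω_j| K_j − 2 K_j² is positive definite. Then the function α_j ↦ −‖K_j α_j‖² + Σ_{q∈Ω_j} ⟨η_j^{(q)}, Φ_j α_j − P_j z_q⟩ + (ρ/2) Σ_{q∈Ω_j} ‖Φ_j α_j − P_j z_q‖² (the α_j-block of the augmented Lagrangian) has a unique minimizer over ℝ^{N_j}, given in closed form by α_j* = (ρ|Ω_j| K_j − 2 K_j²)^{-1} Σ_{q∈Ω_j} Φ_jᵀ(ρ z_q − η_j^{(q)}). -/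

import Mathlib

open scoped RealInnerProductSpace BigOperators
open Matrix

noncomputable section

variable {H : Type*} [NormedAddCommGroup H] [InnerProductSpace ℝ H]

/-- Apply a finite family of vectors to a coefficient vector: `Φ α = ∑ p, α p • Φ p`. -/
def applyFam {n : ℕ} (Φ : Fin n → H) (α : Fin n → ℝ) : H := ∑ p, α p • Φ p

/-- The "transpose" of a family: `Φᵀ w = (⟪Φ p, w⟫)_p`. -/
def famT {n : ℕ} (Φ : Fin n → H) (w : H) : Fin n → ℝ := fun p => ⟪Φ p, w⟫

/-- The Gram matrix of a finite family: `K p q = ⟪Φ p, Φ q⟫`. -/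
def gram {n : ℕ} (Φ : Fin n → H) : Matrix (Fin n) (Fin n) ℝ :=
  Matrix.of fun p q => ⟪Φ p, Φ q⟫

/-- The projection map `P = Φ ∘ K⁻¹ ∘ Φᵀ`. -/
def proj {n : ℕ} (Φ : Fin n → H) (w : H) : H :=
  applyFam Φ ((gram Φ)⁻¹.mulVec (famT Φ w))

/-- Squared Euclidean norm of a coefficient vector. -/
def sqnormVec {n : ℕ} (v : Fin n → ℝ) : ℝ := ∑ p, (v p) ^ 2

/- Auxiliary lemmas -/

lemma inner_applyFam {n : ℕ} (Φ : Fin n → H) (w : H) (α : Fin n → ℝ) :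
    ⟪w, applyFam Φ α⟫ = dotProduct (famT Φ w) α := by
  simp only [applyFam, famT, inner_sum, inner_smul_right, dotProduct]
  refine Finset.sum_congr rfl fun p _ => ?_
  rw [real_inner_comm]; ring

lemma famT_applyFam {n : ℕ} (Φ : Fin n → H) (β : Fin n → ℝ) :
    famT Φ (applyFam Φ β) = (gram Φ).mulVec β := by
  funext p
  simp only [famT, applyFam, inner_sum, inner_smul_right, _root_.gram, Matrix.mulVec,
    dotProduct, Matrix.of_apply]
  refine Finset.sum_congr rfl fun q _ => ?_; ring

lemma famT_proj {n : ℕ} (Φ : Fin n → H) (hK : IsUnit (gram Φ)) (w : H) :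
    famT Φ (proj Φ w) = famT Φ w := by
  rw [proj, famT_applyFam, Matrix.mulVec_mulVec, Matrix.mul_nonsing_inv _
    ((Matrix.isUnit_iff_isUnit_det _).1 hK), Matrix.one_mulVec]

lemma gram_transpose {n : ℕ} (Φ : Fin n → H) : (gram Φ)ᵀ = gram Φ := by
  funext p q
  simp [_root_.gram, Matrix.transpose_apply, real_inner_comm]

lemma sqnormVec_eq_dot {n : ℕ} (v : Fin n → ℝ) : sqnormVec v = dotProduct v v := by
  simp [sqnormVec, dotProduct, sq]

lemma norm_applyFam_sq {n : ℕ} (Φ : Fin n → H) (α : Fin n → ℝ) :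
    ‖applyFam Φ α‖ ^ 2 = dotProduct α ((gram Φ).mulVec α) := by
  rw [← real_inner_self_eq_norm_sq, inner_applyFam, famT_applyFam, dotProduct_comm]

lemma famT_smul_sub {n : ℕ} (Φ : Fin n → H) (ρ : ℝ) (z η : H) :
    famT Φ (ρ • z - η) = ρ • famT Φ z - famT Φ η := by
  funext p
  simp [famT, inner_sub_right, inner_smul_right]

lemma sum_dotP {n : ℕ} {ι : Type*} (s : Finset ι) (g : ι → Fin n → ℝ) (v : Fin n → ℝ) :
    dotProduct (∑ q ∈ s, g q) v = ∑ q ∈ s, dotProduct (g q) v := by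
  simp only [dotProduct, Finset.sum_apply, Finset.sum_mul]
  exact Finset.sum_comm

lemma sqnorm_gram_mulVec {n : ℕ} (Φ : Fin n → H) (α : Fin n → ℝ) :
    sqnormVec ((gram Φ).mulVec α)
      = dotProduct α ((gram Φ * gram Φ).mulVec α) := by
  rw [sqnormVec_eq_dot, ← Matrix.mulVec_mulVec,
    dotProduct_mulVec α (gram Φ) ((gram Φ).mulVec α),
    ← Matrix.mulVec_transpose, gram_transpose]

/-- if `ρ|Ω_j| K_j − 2 K_j²` is positive definite, then the
`α_j`-block of the augmented Lagrangian has a unique minimizer over `ℝ^{N_j}`,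
given in closed form by
`α_j* = (ρ|Ω_j| K_j − 2 K_j²)⁻¹ Σ_{q∈Ω_j} Φ_jᵀ(ρ z_q − η_j^{(q)})`. -/
theorem statement_14 {n : ℕ} (Φ : Fin n → H) (hK : IsUnit (gram Φ))
    {ι : Type*} (Ω : Finset ι) (hΩ : Ω.Nonempty) (ρ : ℝ) (hρ : 0 < ρ)
    (z η : ι → H)
    (hpd : ((ρ * (Ω.card : ℝ)) • gram Φ - (2 : ℝ) • (gram Φ * gram Φ)).PosDef) :
    let f : (Fin n → ℝ) → ℝ := fun α =>
      -sqnormVec ((gram Φ).mulVec α)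
        + ∑ q ∈ Ω, ⟪η q, applyFam Φ α - proj Φ (z q)⟫
        + ρ / 2 * ∑ q ∈ Ω, ‖applyFam Φ α - proj Φ (z q)‖ ^ 2
    let αstar : Fin n → ℝ :=
      ((ρ * (Ω.card : ℝ)) • gram Φ - (2 : ℝ) • (gram Φ * gram Φ))⁻¹.mulVec
        (∑ q ∈ Ω, famT Φ (ρ • z q - η q))
    (∀ α : Fin n → ℝ, f αstar ≤ f α) ∧
    (∀ α : Fin n → ℝ, (∀ α' : Fin n → ℝ, f α ≤ f α') → α = αstar) := by
  intro f αstar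
  set M : Matrix (Fin n) (Fin n) ℝ :=
    (ρ * (Ω.card : ℝ)) • gram Φ - (2 : ℝ) • (gram Φ * gram Φ) with hMdef
  set b : Fin n → ℝ := ∑ q ∈ Ω, famT Φ (ρ • z q - η q) with hbdef
  have hMdet : IsUnit M.det := hpd.det_pos.ne'.isUnit
  have hMstar : M.mulVec αstar = b := by
    show M.mulVec (M⁻¹.mulVec b) = b
    rw [Matrix.mulVec_mulVec, Matrix.mul_nonsing_inv _ hMdet, Matrix.one_mulVec]
  have hMsymm : Mᵀ = M := by
    rw [hMdef]
    simp [Matrix.transpose_smul, Matrix.transpose_sub, Matrix.transpose_mul, gram_transpose]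
  have hsymdot : ∀ u v : Fin n → ℝ, dotProduct u (M.mulVec v)
      = dotProduct v (M.mulVec u) := by
    intro u v
    rw [dotProduct_mulVec, ← Matrix.mulVec_transpose, hMsymm, dotProduct_comm]
  set C : ℝ := ∑ q ∈ Ω, ⟪η q, -proj Φ (z q)⟫ + ρ / 2 * ∑ q ∈ Ω, ‖proj Φ (z q)‖ ^ 2 with hCdef
  -- master expansion
  have hexp : ∀ α : Fin n → ℝ,
      f α = (1/2) * dotProduct α (M.mulVec α) - dotProduct b α + C := by
    intro α
    have h1 : ∀ q : ι, ⟪η q, applyFam Φ α - proj Φ (z q)⟫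
        = dotProduct (famT Φ (η q)) α + ⟪η q, -proj Φ (z q)⟫ := by
      intro q
      rw [sub_eq_add_neg, inner_add_right, inner_applyFam]
    have h2 : ∀ q : ι, ‖applyFam Φ α - proj Φ (z q)‖ ^ 2
        = dotProduct α ((gram Φ).mulVec α)
          - 2 * dotProduct (famT Φ (z q)) α + ‖proj Φ (z q)‖ ^ 2 := by
      intro q
      rw [norm_sub_sq_real, norm_applyFam_sq, real_inner_comm, inner_applyFam,
        famT_proj Φ hK]
    have hb : dotProduct b α
        = ρ * (∑ q ∈ Ω, dotProduct (famT Φ (z q)) α)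
          - ∑ q ∈ Ω, dotProduct (famT Φ (η q)) α := by
      rw [hbdef]
      have hs : (∑ q ∈ Ω, famT Φ (ρ • z q - η q))
          = ρ • (∑ q ∈ Ω, famT Φ (z q)) - ∑ q ∈ Ω, famT Φ (η q) := by
        rw [Finset.smul_sum, ← Finset.sum_sub_distrib]
        exact Finset.sum_congr rfl fun q _ => famT_smul_sub Φ ρ (z q) (η q)
      rw [hs, sub_dotProduct, smul_dotProduct, sum_dotP, sum_dotP,
        smul_eq_mul]
    have hMα : dotProduct α (M.mulVec α)
        = ρ * (Ω.card : ℝ) * dotProduct α ((gram Φ).mulVec α)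
          - 2 * dotProduct α ((gram Φ * gram Φ).mulVec α) := by
      rw [hMdef, Matrix.sub_mulVec, dotProduct_sub, Matrix.smul_mulVec,
        Matrix.smul_mulVec, dotProduct_smul, dotProduct_smul]
      simp [smul_eq_mul]
    simp only [f]
    rw [Finset.sum_congr rfl (fun q _ => h1 q), Finset.sum_congr rfl (fun q _ => h2 q)]
    rw [sqnorm_gram_mulVec, Finset.sum_add_distrib, Finset.sum_add_distrib,
      Finset.sum_sub_distrib, Finset.sum_const, ← Finset.mul_sum, hMα, hb, hCdef,
      nsmul_eq_mul]
    ring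
  -- key difference identity
  have hdiff : ∀ α : Fin n → ℝ, f α - f αstar
      = (1/2) * dotProduct (α - αstar) (M.mulVec (α - αstar)) := by
    intro α
    have hbd : ∀ v : Fin n → ℝ, dotProduct b v
        = dotProduct αstar (M.mulVec v) := by
      intro v
      rw [← hMstar, dotProduct_comm, hsymdot]
    rw [hexp α, hexp αstar, hbd α, hbd αstar]
    have e1 : dotProduct (α - αstar) (M.mulVec (α - αstar))
        = dotProduct α (M.mulVec α) - dotProduct α (M.mulVec αstar)
          - dotProduct αstar (M.mulVec α)
          + dotProduct αstar (M.mulVec αstar) := by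
      rw [Matrix.mulVec_sub, sub_dotProduct, dotProduct_sub,
        dotProduct_sub]
      ring
    have e2 := hsymdot α αstar
    rw [e1]
    linarith [e2]
  have hnonneg : ∀ v : Fin n → ℝ, 0 ≤ dotProduct v (M.mulVec v) := by
    intro v
    by_cases hv : v = 0
    · simp [hv]
    · have := hpd.dotProduct_mulVec_pos hv
      simpa using this.le
  have key : ∀ α : Fin n → ℝ, 0 ≤ f α - f αstar := by
    intro α
    rw [hdiff α]
    have h0 := hnonneg (α - αstar)
    linarith
  refine ⟨fun α => sub_nonneg.1 (key α), ?_⟩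
  intro α hmin
  have h1 : f α ≤ f αstar := hmin αstar
  have heq : f α - f αstar = 0 :=
    le_antisymm (sub_nonpos.2 h1) (key α)
  rw [hdiff α] at heq
  by_contra hne
  have hd0 : α - αstar ≠ 0 := sub_ne_zero_of_ne hne
  have hpos := hpd.dotProduct_mulVec_pos hd0
  have hpos' : (0:ℝ) < dotProduct (α - αstar) (M.mulVec (α - αstar)) := by
    simpa using hpos
  linarith

end
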